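/- arXiv:1805.11034 — 9 statements merged into one kernel-verified Lean document; each statement's English description precedes it below -/
import Mathlib

section
/- Let (X, E) be an entourage space with countable cofinality (i.e., E admits a countable base B with E = {A : A ⊆ F for some F ∈ B}). Then there exists an extended semi-positive-definite map d : X × X → [0,∞] (d(x,x) = 0 for all x) such that E equals the metric entourage structure E_d. -/
open Set

def relInv {X : Type*} (E : Set (X × X)) : Set (X × X) := {p | (p.2, p.1) ∈ E}

def relComp {X : Type*} (E F : Set (X × X)) : Set (X × X) :=
  {p | ∃ y, (p.1, y) ∈ E ∧ (y, p.2) ∈ F}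

def IsEntourageStructure {X : Type*} (𝓔 : Set (Set (X × X))) : Prop :=
  (∀ A ∈ 𝓔, ∀ B, B ⊆ A → B ∈ 𝓔) ∧ (∀ A ∈ 𝓔, ∀ B ∈ 𝓔, A ∪ B ∈ 𝓔) ∧
    Set.diagonal X ∈ 𝓔

def IsQuasiCoarse {X : Type*} (𝓔 : Set (Set (X × X))) : Prop :=
  IsEntourageStructure 𝓔 ∧ ∀ A ∈ 𝓔, ∀ B ∈ 𝓔, relComp A B ∈ 𝓔

def IsSemiCoarse {X : Type*} (𝓔 : Set (Set (X × X))) : Prop :=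
  IsEntourageStructure 𝓔 ∧ ∀ A ∈ 𝓔, relInv A ∈ 𝓔

def IsCoarse {X : Type*} (𝓔 : Set (Set (X × X))) : Prop :=
  IsQuasiCoarse 𝓔 ∧ ∀ A ∈ 𝓔, relInv A ∈ 𝓔

def metricEnt {X : Type*} (d : X → X → ENNReal) : Set (Set (X × X)) :=
  {A | ∃ R : NNReal, A ⊆ {p | d p.1 p.2 < (R : ENNReal)}}

theorem metrizable_of_countable_base {X : Type*} (𝓔 : Set (Set (X × X)))
    (hE : IsEntourageStructure 𝓔) (B : Set (Set (X × X))) (hBc : B.Countable)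
    (hbase : 𝓔 = {A | ∃ F ∈ B, A ⊆ F}) :
    ∃ d : X → X → ENNReal, (∀ x, d x x = 0) ∧ 𝓔 = metricEnt d := by
  -- B is nonempty since the diagonal is in 𝓔
  have hdiag : Set.diagonal X ∈ 𝓔 := hE.2.2
  have hBne : B.Nonempty := by
    rw [hbase] at hdiag
    obtain ⟨F, hF, -⟩ := hdiag
    exact ⟨F, hF⟩
  obtain ⟨f, hf⟩ := hBc.exists_eq_range hBne
  -- increasing sequence of entourages
  set G : ℕ → Set (X × X) := fun n => Nat.rec (Set.diagonal X) (fun n Gn => Gn ∪ f n) n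
    with hG
  have hG0 : G 0 = Set.diagonal X := rfl
  have hGs : ∀ n, G (n + 1) = G n ∪ f n := fun n => rfl
  have hGmono : Monotone G := monotone_nat_of_le_succ (fun n => by
    rw [hGs]; exact subset_union_left)
  have hGE : ∀ n, G n ∈ 𝓔 := by
    intro n
    induction n with
    | zero => exact hE.2.2
    | succ n ih =>
      rw [hGs]
      refine hE.2.1 _ ih _ ?_
      rw [hbase]
      exact ⟨f n, by rw [hf]; exact ⟨n, rfl⟩, subset_rfl⟩
  set d : X → X → ENNReal := fun x y => ⨅ (n : ℕ) (_ : (x, y) ∈ G n), (n : ENNReal)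
    with hd
  refine ⟨d, ?_, ?_⟩
  · intro x
    have : d x x ≤ ((0 : ℕ) : ENNReal) :=
      iInf₂_le 0 (by rw [hG0]; exact rfl)
    simpa using this
  · ext A
    rw [hbase]
    constructor
    · rintro ⟨F, hFB, hAF⟩
      rw [hf] at hFB
      obtain ⟨i, rfl⟩ := hFB
      refine ⟨(i : NNReal) + 2, fun p hp => ?_⟩
      have hpG : p ∈ G (i + 1) := by
        rw [hGs]; exact Or.inr (hAF hp)
      have h1 : d p.1 p.2 ≤ ((i + 1 : ℕ) : ENNReal) := iInf₂_le (i + 1) hpG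
      calc d p.1 p.2 ≤ ((i + 1 : ℕ) : ENNReal) := h1
        _ < (((i : NNReal) + 2 : NNReal) : ENNReal) := by
            push_cast
            exact_mod_cast by norm_num
    · rintro ⟨R, hAR⟩
      obtain ⟨n, hn⟩ := exists_nat_ge R
      have hGnE := hGE n
      rw [hbase] at hGnE
      obtain ⟨F, hFB, hGF⟩ := hGnE
      refine ⟨F, hFB, fun p hp => hGF ?_⟩
      · have hlt : d p.1 p.2 < ((n : ℕ) : ENNReal) := by
          calc d p.1 p.2 < (R : ENNReal) := hAR hp
            _ ≤ ((n : ℕ) : ENNReal) := by exact_mod_cast hn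
        rw [hd] at hlt
        obtain ⟨m, hm⟩ := iInf_lt_iff.mp hlt
        by_cases hmem : (p.1, p.2) ∈ G m
        · simp only [hmem, iInf_pos] at hm
          have hmn : m ≤ n := by exact_mod_cast hm.le
          exact hGmono hmn hmem
        · simp [hmem] at hm
end

section
/- Let f : (X, E_X) → (Y, E_Y) be a map between entourage spaces where E_X is a quasi-coarse structure. If f is large-scale injective (R_f = {(x,y) : f(x) = f(y)} ∈ E_X) and weakly uniformly bounded copreserving, then f is effectively proper. -/
open Set

theorem lsi_wubc_implies_eff_proper {X Y : Type*}
    (𝓔X : Set (Set (X × X))) (𝓔Y : Set (Set (Y × Y)))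
    (hX : IsQuasiCoarse 𝓔X) (hY : IsEntourageStructure 𝓔Y) (f : X → Y)
    (hlsi : {p : X × X | f p.1 = f p.2} ∈ 𝓔X)
    (hwubc : ∀ E ∈ 𝓔Y, ∃ F ∈ 𝓔X,
      (fun p : X × X => (f p.1, f p.2)) '' F = E ∩ (Set.range f ×ˢ Set.range f)) :
    ∀ E ∈ 𝓔Y, (fun p : X × X => (f p.1, f p.2)) ⁻¹' E ∈ 𝓔X := by
  intro E hE
  obtain ⟨F, hF, hFeq⟩ := hwubc E hE
  set R : Set (X × X) := {p : X × X | f p.1 = f p.2} with hR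
  have hmem : relComp (relComp R F) R ∈ 𝓔X :=
    hX.2 _ (hX.2 _ hlsi _ hF) _ hlsi
  refine hX.1.1 _ hmem _ ?_
  intro p hp
  have hp' : (f p.1, f p.2) ∈ E ∩ (Set.range f ×ˢ Set.range f) :=
    ⟨hp, ⟨p.1, rfl⟩, ⟨p.2, rfl⟩⟩
  rw [← hFeq] at hp'
  obtain ⟨q, hq, hqeq⟩ := hp'
  have h1 : f p.1 = f q.1 := (congrArg Prod.fst hqeq).symm
  have h2 : f q.2 = f p.2 := congrArg Prod.snd hqeq
  exact ⟨q.2, ⟨q.1, h1, hq⟩, h2⟩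
end

section
/- Let f : (X, E_X) → (Y, E_Y) be a uniformly bounded copreserving surjective map between entourage spaces. If X is locally finite (E[x] is finite for every E ∈ E_X and x ∈ X), then Y is locally finite. -/
open Set

theorem locally_finite_of_ubc_surjective {X Y : Type*}
    (𝓔X : Set (Set (X × X))) (𝓔Y : Set (Set (Y × Y)))
    (hX : IsEntourageStructure 𝓔X) (hY : IsEntourageStructure 𝓔Y) (f : X → Y)
    (hsurj : Function.Surjective f)
    (hubc : ∀ E ∈ 𝓔Y, ∃ F ∈ 𝓔X, ∀ x : X,
      {y | (f x, y) ∈ E} ∩ Set.range f ⊆ f '' {y | (x, y) ∈ F})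
    (hlf : ∀ E ∈ 𝓔X, ∀ x : X, {y | (x, y) ∈ E}.Finite) :
    ∀ E ∈ 𝓔Y, ∀ y : Y, {z | (y, z) ∈ E}.Finite := by
  intro E hE y
  obtain ⟨x, rfl⟩ := hsurj y
  obtain ⟨F, hF, h⟩ := hubc E hE
  have : {z | (f x, z) ∈ E} ⊆ f '' {y | (x, y) ∈ F} := by
    intro z hz
    exact h x ⟨hz, hsurj z⟩
  exact (((hlf F hF x).image f).subset this)
end

section
/- Let (X, E) be a locally finite entourage space. Then a subset A ⊆ X satisfies (B2) (for every x ∈ A there exists E_x ∈ E with A ⊆ E_x[x]) if and only if it satisfies (B3) (there exists E ∈ E with A ⊆ E[x] for every x ∈ A). -/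
open Set

/-! A set satisfying (B2) lies in a single ball `E₀[x₀]`, so it is finite when balls are finite;
the union of the finitely many entourages `E_x` then witnesses (B3). -/

namespace IsEntourageStructure

variable {X : Type*} {𝓔 : Set (Set (X × X))}

theorem empty_mem (hE : IsEntourageStructure 𝓔) : ∅ ∈ 𝓔 :=
  hE.1 _ hE.2.2 ∅ (empty_subset _)

theorem biUnion_mem (hE : IsEntourageStructure 𝓔) {ι : Type*} {s : Set ι} (hs : s.Finite)
    {f : ι → Set (X × X)} (hf : ∀ i ∈ s, f i ∈ 𝓔) : ⋃ i ∈ s, f i ∈ 𝓔 := by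
  induction s, hs using Set.Finite.induction_on with
  | empty => simpa using hE.empty_mem
  | insert _ _ ih =>
    rw [biUnion_insert]
    exact hE.2.1 _ (hf _ (mem_insert _ _)) _ (ih fun i hi => hf i (mem_insert_of_mem _ hi))

theorem exists_forall_subset_ball_of_finite (hE : IsEntourageStructure 𝓔) {A : Set X}
    (hA : A.Finite) (h : ∀ x ∈ A, ∃ E ∈ 𝓔, A ⊆ {y | (x, y) ∈ E}) :
    ∃ E ∈ 𝓔, ∀ x ∈ A, A ⊆ {y | (x, y) ∈ E} := by
  choose! f hf hAf using h
  exact ⟨⋃ x ∈ A, f x, hE.biUnion_mem hA hf, fun x hx y hy => mem_biUnion hx (hAf x hx hy)⟩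

end IsEntourageStructure

theorem Set.Finite.of_forall_subset_ball {X : Type*} {𝓔 : Set (Set (X × X))}
    (hlf : ∀ E ∈ 𝓔, ∀ x : X, {y | (x, y) ∈ E}.Finite) {A : Set X}
    (h : ∀ x ∈ A, ∃ E ∈ 𝓔, A ⊆ {y | (x, y) ∈ E}) : A.Finite := by
  rcases A.eq_empty_or_nonempty with rfl | ⟨x, hx⟩
  · exact finite_empty
  · obtain ⟨E, hE, hAE⟩ := h x hx
    exact (hlf E hE x).subset hAE

theorem B2_iff_B3_of_locally_finite {X : Type*} (𝓔 : Set (Set (X × X)))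
    (hE : IsEntourageStructure 𝓔)
    (hlf : ∀ E ∈ 𝓔, ∀ x : X, {y | (x, y) ∈ E}.Finite) (A : Set X) :
    (∀ x ∈ A, ∃ E ∈ 𝓔, A ⊆ {y | (x, y) ∈ E}) ↔
      (∃ E ∈ 𝓔, ∀ x ∈ A, A ⊆ {y | (x, y) ∈ E}) :=
  ⟨fun h => hE.exists_forall_subset_ball_of_finite (.of_forall_subset_ball hlf h) h,
    fun ⟨E, hE, hA⟩ x hx => ⟨E, hE, hA x hx⟩⟩
end

section
/- Let M be a monoid and E a quasi-coarse structure on M such that the family of left shift maps {s_x^λ : y ↦ xy | x ∈ M} is equi-bornologous. Then the family I = {E[e] : E ∈ E} is a monoid ideal and the induced left monoid quasi-coarse structure satisfies E_I^λ ⊆ E. -/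
open Set Pointwise

def IsIdealOn {α : Type*} (I : Set (Set α)) : Prop :=
  (∀ A ∈ I, ∀ B, B ⊆ A → B ∈ I) ∧ (∀ A ∈ I, ∀ B ∈ I, A ∪ B ∈ I)

def IsMonoidIdeal {M : Type*} [Monoid M] (I : Set (Set M)) : Prop :=
  IsIdealOn I ∧ {(1 : M)} ∈ I ∧
    (∀ x y : M, {x} ∈ I → {y} ∈ I → {x * y} ∈ I) ∧
    (∀ H ∈ I, ∀ K ∈ I, H * K ∈ I)

def leftEnt {M : Type*} [Monoid M] (I : Set (Set M)) : Set (Set (M × M)) :=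
  {A | ∃ K ∈ I, A ⊆ {p | ∃ k ∈ K, p.2 = p.1 * k}}

theorem monoid_ideal_of_equi_bornologous_shifts {M : Type*} [Monoid M]
    (𝓔 : Set (Set (M × M))) (hq : IsQuasiCoarse 𝓔)
    (heq : ∀ E ∈ 𝓔, ∃ F ∈ 𝓔, ∀ x : M,
      (fun p : M × M => (x * p.1, x * p.2)) '' E ⊆ F) :
    IsMonoidIdeal {B : Set M | ∃ E ∈ 𝓔, B = {y | ((1 : M), y) ∈ E}} ∧
      leftEnt {B : Set M | ∃ E ∈ 𝓔, B = {y | ((1 : M), y) ∈ E}} ⊆ 𝓔 := by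
  obtain ⟨⟨hdown, hunion, hdiag⟩, hcomp⟩ := hq
  have key : ∀ B : Set M, ∀ E ∈ 𝓔, (∀ y ∈ B, ((1:M), y) ∈ E) →
      B ∈ {B : Set M | ∃ E ∈ 𝓔, B = {y | ((1 : M), y) ∈ E}} := by
    intro B E hE hsub
    refine ⟨(fun y => ((1:M), y)) '' B, hdown E hE _ ?_, ?_⟩
    · rintro _ ⟨y, hy, rfl⟩; exact hsub y hy
    · ext y
      constructor
      · intro hy; exact ⟨y, hy, rfl⟩
      · rintro ⟨z, hz, hzy⟩
        have : z = y := congrArg Prod.snd hzy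
        exact this ▸ hz
  constructor
  · refine ⟨⟨?_, ?_⟩, ?_, ?_, ?_⟩
    · rintro A ⟨E, hE, rfl⟩ B hB
      exact key B E hE fun y hy => hB hy
    · rintro A ⟨E, hE, rfl⟩ B ⟨F, hF, rfl⟩
      refine ⟨E ∪ F, hunion E hE F hF, ?_⟩
      ext y; simp [Set.mem_union]
    · exact key {1} (Set.diagonal M) hdiag (by rintro y rfl; rfl)
    · rintro x y ⟨E, hE, hEx⟩ ⟨F, hF, hFy⟩
      obtain ⟨F', hF', hshift⟩ := heq F hF
      refine key {x*y} (relComp E F') (hcomp E hE F' hF') ?_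
      rintro z rfl
      have hx : ((1:M), x) ∈ E := by
        have : x ∈ ({y | ((1:M), y) ∈ E}) := hEx ▸ rfl
        exact this
      have hy1 : ((1:M), y) ∈ F := by
        have : y ∈ ({z | ((1:M), z) ∈ F}) := hFy ▸ rfl
        exact this
      have hxy : (x * 1, x * y) ∈ F' := hshift x ⟨(1, y), hy1, rfl⟩
      exact ⟨x, hx, by simpa using hxy⟩
    · rintro H ⟨E, hE, rfl⟩ K ⟨F, hF, rfl⟩
      obtain ⟨F', hF', hshift⟩ := heq F hF
      refine key _ (relComp E F') (hcomp E hE F' hF') ?_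
      rintro z hz
      obtain ⟨h, hh, k, hk, rfl⟩ := hz
      have hhk : (h * 1, h * k) ∈ F' := hshift h ⟨(1, k), hk, rfl⟩
      exact ⟨h, hh, by simpa using hhk⟩
  · rintro A ⟨K, ⟨E, hE, rfl⟩, hA⟩
    obtain ⟨F, hF, hshift⟩ := heq E hE
    refine hdown F hF A ?_
    intro p hp
    obtain ⟨k, hk, hpk⟩ := hA hp
    have h1 : (p.1 * 1, p.1 * k) ∈ F := hshift p.1 ⟨(1, k), hk, rfl⟩
    have h2 : (p.1, p.1 * k) ∈ F := by simpa using h1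
    have hpe : p = (p.1, p.1 * k) := by
      ext
      · rfl
      · exact hpk
    exact hpe ▸ h2
end

section
/- Let f : G → H be a group homomorphism and I_G, I_H ideals of subsets of G and H respectively containing the respective identities. If f⁻¹(K) ∈ I_G for every K ∈ I_H, then f : (G, E_{I_G}^λ) → (H, E_{I_H}^λ) is effectively proper, i.e., (f × f)⁻¹(E) ∈ E_{I_G}^λ for every E ∈ E_{I_H}^λ. -/
theorem hom_effectively_proper_of_ideal_preimage {G H : Type*} [Group G] [Group H]
    (f : G →* H) (IG : Set (Set G)) (IH : Set (Set H))
    (hG : IsIdealOn IG) (hGe : {(1 : G)} ∈ IG)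
    (hH : IsIdealOn IH) (hHe : {(1 : H)} ∈ IH)
    (hpre : ∀ K ∈ IH, f ⁻¹' K ∈ IG) :
    ∀ A ∈ leftEnt IH, (fun p : G × G => (f p.1, f p.2)) ⁻¹' A ∈ leftEnt IG := by
  rintro A ⟨K, hK, hA⟩
  refine ⟨f ⁻¹' K, hpre K hK, ?_⟩
  rintro ⟨x, y⟩ hxy
  obtain ⟨k, hk, hEq⟩ := hA hxy
  refine ⟨x⁻¹ * y, ?_, by group⟩
  simp only at hEq
  simp only [Set.mem_preimage, map_mul, map_inv, hEq, inv_mul_cancel_left]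
  exact hk
end

section
/- Let f : (X, E_X) → (Y, E_Y) be a large-scale bijective map between quasi-coarse spaces and g a Sym-coarse inverse of f. Then f is bornologous if and only if g is effectively proper. -/
open Set

def symPart {X : Type*} (𝓔 : Set (Set (X × X))) : Set (Set (X × X)) :=
  {F | F ∈ 𝓔 ∧ relInv F ∈ 𝓔}

/-- Two maps into an entourage space are Sym-close. -/
def closeMaps {Z X : Type*} (𝓔 : Set (Set (X × X))) (h k : Z → X) : Prop :=
  {p : X × X | ∃ z, p = (h z, k z)} ∈ symPart 𝓔

theorem bornologous_iff_inverse_eff_proper {X Y : Type*}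
    (𝓔X : Set (Set (X × X))) (𝓔Y : Set (Set (Y × Y)))
    (hX : IsQuasiCoarse 𝓔X) (hY : IsQuasiCoarse 𝓔Y) (f : X → Y) (g : Y → X)
    (hlsi : {p : X × X | f p.1 = f p.2} ∈ 𝓔X)
    (hlss : ∃ M ∈ symPart 𝓔Y, relInv M = M ∧ ∀ y : Y, ∃ x : X, (f x, y) ∈ M)
    (hgf : closeMaps 𝓔X (g ∘ f) id) (hfg : closeMaps 𝓔Y (f ∘ g) id) :
    (∀ E ∈ 𝓔X, (fun p : X × X => (f p.1, f p.2)) '' E ∈ 𝓔Y) ↔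
      (∀ E ∈ 𝓔X, (fun p : Y × Y => (g p.1, g p.2)) ⁻¹' E ∈ 𝓔Y) := by
  obtain ⟨hD, hDinv⟩ := hfg
  obtain ⟨hC, hCinv⟩ := hgf
  constructor
  · intro hb E hE
    apply hY.1.1 _ (hY.2 _ (hY.2 _ hDinv _ (hb E hE)) _ hD)
    rintro ⟨y, y'⟩ hp
    exact ⟨f (g y'), ⟨f (g y), ⟨y, rfl⟩, ⟨(g y, g y'), hp, rfl⟩⟩, ⟨y', rfl⟩⟩
  · intro hp E hE
    apply hY.1.1 _ (hp _ (hX.2 _ (hX.2 _ hC _ hE) _ hCinv))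
    rintro ⟨a, b⟩ ⟨⟨x, x'⟩, hxx, heq⟩
    obtain ⟨h1, h2⟩ := Prod.mk.injEq .. ▸ heq
    subst h1; subst h2
    exact ⟨x', ⟨x, ⟨x, rfl⟩, hxx⟩, ⟨x', rfl⟩⟩
end

section
/- Let (X, E_X) and (Y, E_Y) be quasi-coarse spaces that are Sym-coarsely equivalent (there exist bornologous maps f : X → Y and g : Y → X with g ∘ f Sym-close to id_X and f ∘ g Sym-close to id_Y). If E_X is a coarse structure, then E_Y is a coarse structure. -/
open Set

theorem coarse_of_sym_coarsely_equivalent {X Y : Type*}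
    (𝓔X : Set (Set (X × X))) (𝓔Y : Set (Set (Y × Y)))
    (hX : IsQuasiCoarse 𝓔X) (hY : IsQuasiCoarse 𝓔Y) (f : X → Y) (g : Y → X)
    (hf : ∀ E ∈ 𝓔X, (fun p : X × X => (f p.1, f p.2)) '' E ∈ 𝓔Y)
    (hg : ∀ E ∈ 𝓔Y, (fun p : Y × Y => (g p.1, g p.2)) '' E ∈ 𝓔X)
    (hgf : closeMaps 𝓔X (g ∘ f) id) (hfg : closeMaps 𝓔Y (f ∘ g) id)
    (hc : IsCoarse 𝓔X) : IsCoarse 𝓔Y := by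
  refine ⟨hY, fun A hA => ?_⟩
  obtain ⟨hFY, hFYinv⟩ := hfg
  set F : Set (Y × Y) := {p : Y × Y | ∃ z, p = ((f ∘ g) z, id z)} with hF
  -- (g×g)''A ∈ 𝓔X, its inverse in 𝓔X, push forward
  have h1 : (fun p : Y × Y => (g p.1, g p.2)) '' A ∈ 𝓔X := hg A hA
  have h2 : relInv ((fun p : Y × Y => (g p.1, g p.2)) '' A) ∈ 𝓔X := hc.2 _ h1
  have h3 : (fun p : X × X => (f p.1, f p.2)) '' relInv ((fun p : Y × Y => (g p.1, g p.2)) '' A) ∈ 𝓔Y := hf _ h2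
  set B := (fun p : X × X => (f p.1, f p.2)) '' relInv ((fun p : Y × Y => (g p.1, g p.2)) '' A) with hB
  have hcomp : relComp (relInv F) (relComp B F) ∈ 𝓔Y :=
    hY.2 _ hFYinv _ (hY.2 _ h3 _ hFY)
  apply hY.1.1 _ hcomp
  rintro ⟨b, a⟩ hab
  have hab' : (a, b) ∈ A := hab
  refine ⟨f (g b), ⟨b, rfl⟩, f (g a), ?_, ⟨a, rfl⟩⟩
  exact ⟨(g b, g a), ⟨(a, b), hab', rfl⟩, rfl⟩
end

section
/- Let (X, E) be a strongly connected quasi-coarse space with a countable base. Then there exists a quasi-pseudometric d on X taking only finite values and satisfying d(x,x)=0 and the triangle inequality, such that E equals the metric entourage structure E_d. -/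
open Set

lemma relComp_diag_left {X : Type*} (S : Set (X × X)) :
    relComp (Set.diagonal X) S = S := by
  ext ⟨a, b⟩
  simp [relComp, Set.diagonal]

lemma relComp_diag_right {X : Type*} (S : Set (X × X)) :
    relComp S (Set.diagonal X) = S := by
  ext ⟨a, b⟩
  constructor
  · rintro ⟨y, hy, hd⟩
    obtain rfl : y = b := hd
    exact hy
  · intro h
    exact ⟨b, h, rfl⟩

lemma relComp_mono {X : Type*} {A A' B B' : Set (X × X)} (hA : A ⊆ A')
    (hB : B ⊆ B') : relComp A B ⊆ relComp A' B' := by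
  rintro ⟨a, b⟩ ⟨y, h1, h2⟩
  exact ⟨y, hA h1, hB h2⟩

theorem quasi_metrizable_of_strongly_connected_countable_base {X : Type*}
    (𝓔 : Set (Set (X × X))) (hq : IsQuasiCoarse 𝓔)
    (hconn : ⋃₀ 𝓔 = Set.univ)
    (B : Set (Set (X × X))) (hBc : B.Countable)
    (hbase : 𝓔 = {A | ∃ F ∈ B, A ⊆ F}) :
    ∃ d : X → X → ℝ, (∀ x y, 0 ≤ d x y) ∧ (∀ x, d x x = 0) ∧
      (∀ x y z, d x y ≤ d x z + d z y) ∧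
      𝓔 = {A | ∃ R : ℝ, 0 ≤ R ∧ A ⊆ {p | d p.1 p.2 ≤ R}} := by
  classical
  obtain ⟨⟨hdown, hunion, hdiag⟩, hcomp⟩ := hq
  -- B is nonempty since the diagonal is in 𝓔
  have hBne : B.Nonempty := by
    have := hbase ▸ hdiag
    rcases this with ⟨F, hF, _⟩
    exact ⟨F, hF⟩
  obtain ⟨f, hf⟩ := Set.Countable.exists_eq_range hBc hBne
  have hfmem : ∀ n, f n ∈ 𝓔 := by
    intro n
    rw [hbase]
    exact ⟨f n, by rw [hf]; exact Set.mem_range_self n, subset_rfl⟩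
  -- the entourage sequence G
  set G : ℕ → Set (X × X) := fun n =>
    Nat.rec (Set.diagonal X) (fun n Gn => (Gn ∪ f n) ∪ relComp Gn Gn) n with hG
  have hG0 : G 0 = Set.diagonal X := rfl
  have hGs : ∀ n, G (n + 1) = (G n ∪ f n) ∪ relComp (G n) (G n) := fun n => rfl
  have hGmem : ∀ n, G n ∈ 𝓔 := by
    intro n
    induction n with
    | zero => exact hdiag
    | succ n ih =>
      rw [hGs]
      exact hunion _ (hunion _ ih _ (hfmem n)) _ (hcomp _ ih _ ih)
  have hGstep : ∀ n, G n ⊆ G (n + 1) := by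
    intro n
    rw [hGs]
    exact fun p hp => Or.inl (Or.inl hp)
  have hGmono : ∀ {m n : ℕ}, m ≤ n → G m ⊆ G n := by
    intro m n h
    induction h with
    | refl => exact subset_rfl
    | step h ih => exact ih.trans (hGstep _)
  have hfsub : ∀ n, f n ⊆ G (n + 1) := by
    intro n
    rw [hGs]
    exact fun p hp => Or.inl (Or.inr hp)
  -- grading
  have hgrade : ∀ m k, relComp (G m) (G k) ⊆ G (m + k) := by
    intro m k
    match m, k with
    | 0, k => rw [hG0, relComp_diag_left, Nat.zero_add]
    | m + 1, 0 => rw [hG0, relComp_diag_right]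
    | m + 1, k + 1 =>
      have h1 : G (m + 1) ⊆ G (max (m + 1) (k + 1)) :=
        hGmono (show m + 1 ≤ max (m + 1) (k + 1) by omega)
      have h2 : G (k + 1) ⊆ G (max (m + 1) (k + 1)) :=
        hGmono (show k + 1 ≤ max (m + 1) (k + 1) by omega)
      refine (relComp_mono h1 h2).trans ?_
      refine subset_trans ?_ (hGmono (show max (m + 1) (k + 1) + 1 ≤ m + 1 + (k + 1) by omega))
      rw [hGs]
      exact fun p hp => Or.inr hp
  -- every pair lies in some G n
  have hex : ∀ x y : X, ∃ n, (x, y) ∈ G n := by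
    intro x y
    have : (x, y) ∈ ⋃₀ 𝓔 := by rw [hconn]; trivial
    rcases this with ⟨S, hS, hxy⟩
    rw [hbase] at hS
    rcases hS with ⟨F, hF, hSF⟩
    rw [hf] at hF
    rcases hF with ⟨n, rfl⟩
    exact ⟨n + 1, hfsub n (hSF hxy)⟩
  refine ⟨fun x y => (Nat.find (hex x y) : ℝ), fun x y => Nat.cast_nonneg _,
    ?_, ?_, ?_⟩
  · intro x
    show ((Nat.find (hex x x) : ℝ)) = 0
    have h0 : Nat.find (hex x x) = 0 :=
      Nat.le_zero.mp (Nat.find_min' (hex x x) (show (x, x) ∈ G 0 from rfl))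
    rw [h0, Nat.cast_zero]
  · intro x y z
    show ((Nat.find (hex x y) : ℝ)) ≤ Nat.find (hex x z) + Nat.find (hex z y)
    have hxz := Nat.find_spec (hex x z)
    have hzy := Nat.find_spec (hex z y)
    have hmem : (x, y) ∈ G (Nat.find (hex x z) + Nat.find (hex z y)) :=
      hgrade _ _ ⟨z, hxz, hzy⟩
    have h := Nat.find_min' (hex x y) hmem
    exact_mod_cast h
  · ext A
    constructor
    · intro hA
      rw [hbase] at hA
      rcases hA with ⟨F, hF, hAF⟩
      rw [hf] at hF
      rcases hF with ⟨n, rfl⟩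
      refine ⟨(n + 1 : ℕ), Nat.cast_nonneg _, ?_⟩
      intro p hp
      have hmem : (p.1, p.2) ∈ G (n + 1) := hfsub n (hAF hp)
      have h := Nat.find_min' (hex p.1 p.2) (m := n + 1) hmem
      show ((Nat.find (hex p.1 p.2) : ℝ)) ≤ ((n + 1 : ℕ) : ℝ)
      exact_mod_cast h
    · rintro ⟨R, hR, hsub⟩
      have hAG : A ⊆ G ⌈R⌉₊ := by
        intro p hp
        have hd : ((Nat.find (hex p.1 p.2) : ℝ)) ≤ R := hsub hp
        have hle : Nat.find (hex p.1 p.2) ≤ ⌈R⌉₊ := by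
          have : ((Nat.find (hex p.1 p.2) : ℝ)) ≤ (⌈R⌉₊ : ℝ) :=
            hd.trans (Nat.le_ceil R)
          exact_mod_cast this
        exact hGmono hle (Nat.find_spec (hex p.1 p.2))
      exact hdown _ (hGmem _) _ hAG
end
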